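/- In the universal enveloping algebra H = U(gl_2 ⋉ (k^2 ⊕ (k^2)*)), the element b = y_1 x - x_1 y is central. -/

import Mathlib

/-!
Since `H` is generated by `e, f, h, t, x, y, x₁, y₁`, it suffices that `b = y₁x - x₁y` commutes
with each generator. The abelian ideal `V` commutes with `b` outright. For `g ∈ gl₂`, `ad g` is a
derivation, and `b` is the symplectic pairing of the two copies `(x, y)` and `(x₁, y₁)`, which
`sl₂` acts on in the same way; the pairing is `sl₂`-invariant, and `t` acts on the two copies by
opposite scalars, so `⁅g, b⁆ = 0`.
-/

theorem Algebra.mem_center_of_forall_commute_of_adjoin_eq_top {R A : Type*} [CommSemiring R]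
    [Semiring A] [Algebra R A] {s : Set A} (hs : Algebra.adjoin R s = ⊤) {a : A}
    (h : ∀ g ∈ s, Commute a g) : a ∈ Subalgebra.center R A :=
  Subalgebra.mem_center_iff.2 fun _ =>
    (Algebra.commute_of_mem_adjoin_of_forall_mem_commute (hs ▸ Algebra.mem_top) h).eq.symm

theorem Ring.lie_mul {A : Type*} [Ring A] (a b c : A) : ⁅a, b * c⁆ = ⁅a, b⁆ * c + b * ⁅a, c⁆ := by
  simp only [Ring.lie_def]
  noncomm_ring

theorem commute_mul_sub_mul_of_lie {A : Type*} [Ring A] {g p q r s : A}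
    (h : ⁅g, p⁆ * q + p * ⁅g, q⁆ = ⁅g, r⁆ * s + r * ⁅g, s⁆) : Commute g (p * q - r * s) := by
  rw [commute_iff_lie_eq, ← sub_eq_zero.2 h, ← Ring.lie_mul, ← Ring.lie_mul]
  simp only [Ring.lie_def]
  noncomm_ring

theorem stmt4_general {k : Type} [Field k] {A : Type} [Ring A] [Algebra k A]
    (ee ff hh tt xx yy x1 y1 : A)
    (hEX : ⁅ee, xx⁆ = 0) (hEY : ⁅ee, yy⁆ = xx)
    (hFX : ⁅ff, xx⁆ = yy) (hFY : ⁅ff, yy⁆ = 0)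
    (hHX : ⁅hh, xx⁆ = xx) (hHY : ⁅hh, yy⁆ = -yy)
    (hTX : ⁅tt, xx⁆ = xx) (hTY : ⁅tt, yy⁆ = yy)
    (hEX1 : ⁅ee, x1⁆ = 0) (hEY1 : ⁅ee, y1⁆ = x1)
    (hFX1 : ⁅ff, x1⁆ = y1) (hFY1 : ⁅ff, y1⁆ = 0)
    (hHX1 : ⁅hh, x1⁆ = x1) (hHY1 : ⁅hh, y1⁆ = -y1)
    (hTX1 : ⁅tt, x1⁆ = -x1) (hTY1 : ⁅tt, y1⁆ = -y1)
    (hXY : ⁅xx, yy⁆ = 0) (hXX1 : ⁅xx, x1⁆ = 0) (hXY1 : ⁅xx, y1⁆ = 0)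
    (hYX1 : ⁅yy, x1⁆ = 0) (hYY1 : ⁅yy, y1⁆ = 0) (hX1Y1 : ⁅x1, y1⁆ = 0)
    (hgen : Algebra.adjoin k ({ee, ff, hh, tt, xx, yy, x1, y1} : Set A) = ⊤)
    :
    (y1*xx - x1*yy) ∈ Subalgebra.center k A := by
  have hxy := commute_iff_lie_eq.2 hXY
  have hxx1 := commute_iff_lie_eq.2 hXX1
  have hxy1 := commute_iff_lie_eq.2 hXY1
  have hyx1 := commute_iff_lie_eq.2 hYX1
  have hyy1 := commute_iff_lie_eq.2 hYY1
  have hx1y1 := commute_iff_lie_eq.2 hX1Y1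
  refine Algebra.mem_center_of_forall_commute_of_adjoin_eq_top hgen fun g hg => Commute.symm ?_
  simp only [Set.mem_insert_iff, Set.mem_singleton_iff] at hg
  rcases hg with rfl | rfl | rfl | rfl | rfl | rfl | rfl | rfl
  · exact commute_mul_sub_mul_of_lie (by rw [hEY1, hEX, hEX1, hEY]; noncomm_ring)
  · exact commute_mul_sub_mul_of_lie (by rw [hFY1, hFX, hFX1, hFY]; noncomm_ring)
  · exact commute_mul_sub_mul_of_lie (by rw [hHY1, hHX, hHX1, hHY]; noncomm_ring)
  · exact commute_mul_sub_mul_of_lie (by rw [hTY1, hTX, hTX1, hTY]; noncomm_ring)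
  · exact (hxy1.mul_right (.refl _)).sub_right (hxx1.mul_right hxy)
  · exact (hyy1.mul_right hxy.symm).sub_right (hyx1.mul_right (.refl _))
  · exact (hx1y1.mul_right hxx1.symm).sub_right ((Commute.refl _).mul_right hyx1.symm)
  · exact ((Commute.refl _).mul_right hxy1.symm).sub_right (hx1y1.symm.mul_right hyy1.symm)

theorem stmt4 {k : Type} [Field k] [CharZero k] {A : Type} [Ring A] [Algebra k A]
    (ee ff hh tt xx yy x1 y1 : A)
    (hHE : ⁅hh, ee⁆ = 2*ee) (hHF : ⁅hh, ff⁆ = -(2*ff)) (hEF : ⁅ee, ff⁆ = hh)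
    (hTE : ⁅tt, ee⁆ = 0) (hTF : ⁅tt, ff⁆ = 0) (hTH : ⁅tt, hh⁆ = 0)
    (hEX : ⁅ee, xx⁆ = 0) (hEY : ⁅ee, yy⁆ = xx)
    (hFX : ⁅ff, xx⁆ = yy) (hFY : ⁅ff, yy⁆ = 0)
    (hHX : ⁅hh, xx⁆ = xx) (hHY : ⁅hh, yy⁆ = -yy)
    (hTX : ⁅tt, xx⁆ = xx) (hTY : ⁅tt, yy⁆ = yy)
    (hEX1 : ⁅ee, x1⁆ = 0) (hEY1 : ⁅ee, y1⁆ = x1)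
    (hFX1 : ⁅ff, x1⁆ = y1) (hFY1 : ⁅ff, y1⁆ = 0)
    (hHX1 : ⁅hh, x1⁆ = x1) (hHY1 : ⁅hh, y1⁆ = -y1)
    (hTX1 : ⁅tt, x1⁆ = -x1) (hTY1 : ⁅tt, y1⁆ = -y1)
    (hXY : ⁅xx, yy⁆ = 0) (hXX1 : ⁅xx, x1⁆ = 0) (hXY1 : ⁅xx, y1⁆ = 0)
    (hYX1 : ⁅yy, x1⁆ = 0) (hYY1 : ⁅yy, y1⁆ = 0) (hX1Y1 : ⁅x1, y1⁆ = 0)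
    (hgen : Algebra.adjoin k ({ee, ff, hh, tt, xx, yy, x1, y1} : Set A) = ⊤)
    (hPBW : LinearIndependent k (fun m : Fin 8 → ℕ =>
      ee ^ m 0 * ff ^ m 1 * hh ^ m 2 * tt ^ m 3 * xx ^ m 4 * yy ^ m 5 * x1 ^ m 6 * y1 ^ m 7))
    :
    (y1*xx - x1*yy) ∈ Subalgebra.center k A :=
  stmt4_general ee ff hh tt xx yy x1 y1 hEX hEY hFX hFY hHX hHY hTX hTY hEX1 hEY1 hFX1 hFY1 hHX1
    hHY1 hTX1 hTY1 hXY hXX1 hXY1 hYX1 hYY1 hX1Y1 hgen
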